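/- Existence of infinite runs: for every sequence of channel actions σ over Σ and every word x, there exists an infinite sequence of words x = x₀, x₁, x₂, … with xᵢ →^σ x_{i+1} for all i ∈ ℕ if, and only if, pr[σ^k](ε) ⊑ x for every k ∈ ℕ. -/

import Mathlib

open List
/-- `wpow u k` is the word `u` concatenated `k` times. -/
def wpow {β : Type*} (u : List β) (k : ℕ) : List β := (List.replicate k u).flatten

/-- Auxiliary residual operation, working on reversed words. -/
def resAux {α : Type*} [DecidableEq α] : List α → List α → List α
  | xr, [] => xr
  | [], _ :: _ => []
  | a :: xr, b :: vr => if a = b then resAux xr vr else resAux (a :: xr) vr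
termination_by xr vr => vr.length

/-- The residual `x / v`: the prefix of `x` obtained by removing from `x`
its longest suffix that is a subword of `v`. -/
def res {α : Type*} [DecidableEq α] (x v : List α) : List α :=
  (resAux x.reverse v.reverse).reverse

inductive Act (α : Type*) where
  | write : List α → Act α
  | read : List α → Act α

/-- written part -/
def wri {α : Type*} : List (Act α) → List α
  | [] => []
  | Act.write w :: σ => w ++ wri σ
  | Act.read _ :: σ => wri σ

/-- read part -/
def rea {α : Type*} : List (Act α) → List α
  | [] => []
  | Act.write _ :: σ => rea σ
  | Act.read w :: σ => w ++ rea σ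

/-- `pr σ x` : minimal `σ`-predecessor of `x` (processing `σ` right-to-left). -/
def pr {α : Type*} [DecidableEq α] : List (Act α) → List α → List α
  | [], x => x
  | Act.write v :: σ, x => res (pr σ x) v
  | Act.read u :: σ, x => u ++ pr σ x

/-- lossy step for a single channel action -/
def stepAct {α : Type*} : Act α → List α → List α → Prop
  | Act.write w, x, y => y <+ x ++ w
  | Act.read w, x, y => w ++ y <+ x

/-- lossy steps along a sequence of channel actions -/
def steps {α : Type*} : List (Act α) → List α → List α → Prop
  | [], x, y => x = y
  | θ :: σ, x, y => ∃ z, stepAct θ x z ∧ steps σ z y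

/-- `w` is a fractional power of `u` -/
def FracPow {α : Type*} (u w : List α) : Prop := ∃ k : ℕ, w <+: wpow u k

/-- `x ⊖ u` : remainder of `x` after reading the leftmost embedding of `u`. -/
def ominus {α : Type*} [DecidableEq α] : List α → List α → List α
  | x, [] => x
  | [], _ :: _ => []
  | a :: x, b :: u => if a = b then ominus x u else ominus x (b :: u)

/-- `σ` is increasing -/
def Increasing {α : Type*} (σ : List (Act α)) : Prop :=
  0 < (wri σ).length ∧
    wpow (rea σ) (wri σ).length <+ wpow (wri σ) ((wri σ).length - 1)


/-!
`pr σ y ⊑ x` holds exactly when `σ` leads from `x` to some superword of `y`. Along a run,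
`x →^{σ^k} f k`, so `pr[σ^k](ε) ⊑ x`. Conversely the words `pr[σ^k](ε)` form a `⊑`-chain
bounded in length by `|x|`, so it becomes stationary at some `y` with `pr σ y = y ⊑ x`; from
every superword of `y` the action sequence `σ` leads to another superword of `y`, which gives
an infinite run from `x`.
-/

section Residual

variable {α : Type*} [DecidableEq α]

lemma sublist_append_resAux (p v : List α) : p <+ v ++ resAux p v := by
  induction p, v using resAux.induct with
  | case1 => simp [resAux]
  | case2 b vr => simp [resAux]
  | case3 xr b vr ih =>
    rw [resAux, if_pos rfl]
    exact ih.cons_cons b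
  | case4 a xr b vr hab ih =>
    rw [resAux, if_neg hab]
    exact ih.cons b

lemma resAux_sublist_of_sublist_append {p v x : List α} (h : p <+ v ++ x) :
    resAux p v <+ x := by
  induction p, v using resAux.induct generalizing x with
  | case1 xr => simpa [resAux] using h
  | case2 b vr => simp [resAux]
  | case3 xr b vr ih =>
    rw [resAux, if_pos rfl]
    rcases sublist_cons_iff.mp h with h' | ⟨r, hr, hr'⟩
    · exact ih ((sublist_cons_self b xr).trans h')
    · cases hr
      exact ih hr'
  | case4 a xr b vr hab ih =>
    rw [resAux, if_neg hab]
    rcases sublist_cons_iff.mp h with h' | ⟨r, hr, -⟩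
    · exact ih h'
    · cases hr
      exact absurd rfl hab

/-- The residual is the lower adjoint of `· ++ v` for the subword order. -/
lemma res_sublist_iff {p v x : List α} : res p v <+ x ↔ p <+ x ++ v := by
  rw [res, ← reverse_sublist, reverse_reverse]
  constructor
  · intro h
    rw [← reverse_sublist, reverse_append]
    exact (sublist_append_resAux p.reverse v.reverse).trans (h.append_left _)
  · intro h
    exact resAux_sublist_of_sublist_append (by rw [← reverse_append]; exact reverse_sublist.mpr h)

lemma res_mono {p p' : List α} (v : List α) (h : p <+ p') : res p v <+ res p' v :=
  res_sublist_iff.mpr (h.trans (res_sublist_iff.mp (Sublist.refl _)))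

end Residual

section Predecessor

variable {α : Type*}

lemma wpow_succ (u : List α) (k : ℕ) : wpow u (k + 1) = u ++ wpow u k := by
  simp [wpow, replicate_succ]

lemma wpow_succ' (u : List α) (k : ℕ) : wpow u (k + 1) = wpow u k ++ u := by
  simp [wpow, replicate_succ']

lemma steps_append {σ₁ σ₂ : List (Act α)} {x z y : List α}
    (h₁ : steps σ₁ x z) (h₂ : steps σ₂ z y) : steps (σ₁ ++ σ₂) x y := by
  induction σ₁ generalizing x with
  | nil => cases h₁; exact h₂
  | cons θ σ ih =>
    obtain ⟨w, hw, hws⟩ := h₁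
    exact ⟨w, hw, ih hws⟩

lemma steps_wpow_of_forall_steps_succ {σ : List (Act α)} {f : ℕ → List α}
    (hf : ∀ i, steps σ (f i) (f (i + 1))) (k : ℕ) : steps (wpow σ k) (f 0) (f k) := by
  induction k with
  | zero => rfl
  | succ k ih => rw [wpow_succ']; exact steps_append ih (hf k)

variable [DecidableEq α]

lemma pr_mono (σ : List (Act α)) {y y' : List α} (h : y <+ y') : pr σ y <+ pr σ y' := by
  induction σ with
  | nil => exact h
  | cons θ σ ih =>
    cases θ with
    | write v => exact res_mono v ih
    | read u => exact ih.append_left u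

lemma pr_append (σ₁ σ₂ : List (Act α)) (x : List α) :
    pr (σ₁ ++ σ₂) x = pr σ₁ (pr σ₂ x) := by
  induction σ₁ with
  | nil => rfl
  | cons θ σ ih => cases θ <;> simp [pr, ih]

lemma pr_wpow_succ (σ : List (Act α)) (k : ℕ) (x : List α) :
    pr (wpow σ (k + 1)) x = pr σ (pr (wpow σ k) x) := by
  rw [wpow_succ, pr_append]

lemma pr_sublist_iff_exists_steps {σ : List (Act α)} {x y : List α} :
    pr σ y <+ x ↔ ∃ z, y <+ z ∧ steps σ x z := by
  induction σ generalizing x with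
  | nil => exact ⟨fun h => ⟨x, h, rfl⟩, fun ⟨z, hz, hxz⟩ => hxz ▸ hz⟩
  | cons θ σ ih =>
    constructor
    · intro h
      obtain ⟨z, hz, hsteps⟩ := ih.mp (Sublist.refl (pr σ y))
      refine ⟨z, hz, pr σ y, ?_, hsteps⟩
      cases θ with
      | write v => exact res_sublist_iff.mp h
      | read u => exact h
    · rintro ⟨z, hz, w, hw, hsteps⟩
      have hpr : pr σ y <+ w := ih.mpr ⟨z, hz, hsteps⟩
      cases θ with
      | write v => exact res_sublist_iff.mpr (hpr.trans hw)
      | read u => exact (hpr.append_left u).trans hw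

lemma pr_wpow_nil_sublist_succ (σ : List (Act α)) (k : ℕ) :
    pr (wpow σ k) [] <+ pr (wpow σ (k + 1)) [] := by
  induction k with
  | zero => exact nil_sublist _
  | succ k ih => simpa only [pr_wpow_succ] using pr_mono σ ih

lemma exists_run_of_pr_sublist_self {σ : List (Act α)} {x y : List α}
    (hy : pr σ y <+ y) (hyx : y <+ x) :
    ∃ f : ℕ → List α, f 0 = x ∧ ∀ i, steps σ (f i) (f (i + 1)) := by
  have hnext : ∀ z : {z : List α // y <+ z}, ∃ z' : {z : List α // y <+ z}, steps σ z z' := by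
    rintro ⟨z, hz⟩
    obtain ⟨z', hz', hsteps⟩ := pr_sublist_iff_exists_steps.mp (hy.trans hz)
    exact ⟨⟨z', hz'⟩, hsteps⟩
  choose g hg using hnext
  refine ⟨fun i => (g^[i] ⟨x, hyx⟩).1, rfl, fun i => ?_⟩
  simpa only [Function.iterate_succ_apply'] using hg _

end Predecessor

lemma List.exists_eq_succ_of_sublist_succ {α : Type*} {s : ℕ → List α} {B : ℕ}
    (hs : ∀ k, s k <+ s (k + 1)) (hB : ∀ k, (s k).length ≤ B) : ∃ K, s (K + 1) = s K := by
  by_contra! hne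
  have hlen : StrictMono fun k => (s k).length := strictMono_nat_of_lt_succ fun k =>
    (hs k).length_le.lt_of_ne fun heq => hne k ((hs k).eq_of_length heq).symm
  exact Nat.not_succ_le_self B ((hlen.id_le (B + 1)).trans (hB (B + 1)))

/-- existence of an infinite run `x = x₀ →^σ x₁ →^σ x₂ →^σ ⋯`
iff `pr[σ^k](ε) ⊑ x` for every `k`. -/
theorem infinite_run_iff {α : Type*} [DecidableEq α]
    (σ : List (Act α)) (x : List α) :
    (∃ f : ℕ → List α, f 0 = x ∧ ∀ i : ℕ, steps σ (f i) (f (i + 1))) ↔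
    (∀ k : ℕ, pr (wpow σ k) [] <+ x) := by
  constructor
  · rintro ⟨f, rfl, hf⟩ k
    exact pr_sublist_iff_exists_steps.mpr ⟨f k, nil_sublist _, steps_wpow_of_forall_steps_succ hf k⟩
  · intro h
    obtain ⟨K, hK⟩ := exists_eq_succ_of_sublist_succ (pr_wpow_nil_sublist_succ σ)
      fun k => (h k).length_le
    rw [pr_wpow_succ] at hK
    exact exists_run_of_pr_sublist_self (by rw [hK]) (h K)
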